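/- Existence of asymmetric-information equilibrium strategies: fix T with 0 < T ≤ min (θ̲₁ · T_max) (θ̲₂ · T_max), and suppose the minimal-type constrained-equilibrium condition holds: σ₁(θ̲₁) ≤ m_A(σ₂(θ̲₂)) and σ₂(θ̲₂) ≥ s_A(σ₁(θ̲₁)). Then the T-targeting strategy profile is an ex-post equilibrium: for every θ₁ ∈ [θ̲₁, θ̄₁] and every θ₂ ∈ [θ̲₂, θ̄₂], σ₁(θ₁) maximizes x ↦ π_mm(x, σ₂(θ₂); θ₁, θ₂) over [0, σ₂(θ₂)] and σ₂(θ₂) maximizes y ↦ π_rm(σ₁(θ₁), y; θ₁, θ₂) over [σ₁(θ₁), r_b]. -/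

import Mathlib

open Set

/-- Type-dependent interdealer trade quantity. -/
noncomputable def interQt (D S : ℝ → ℝ) (θ1 θ2 x y : ℝ) : ℝ :=
  min (θ1 * D x) (θ2 * S y)

/-- Type-dependent payoff of `BD_mm`. -/
noncomputable def piMMt (D S : ℝ → ℝ) (θ1 θ2 x y : ℝ) : ℝ :=
  (1 / 2) * max (y - x) 0 * interQt D S θ1 θ2 x y -
    max (θ1 * D x - interQt D S θ1 θ2 x y) 0 * x

/-- Type-dependent payoff of `BD_rm`. -/
noncomputable def piRMt (D S : ℝ → ℝ) (θ1 θ2 x y : ℝ) : ℝ :=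
  (1 / 2) * max (y - x) 0 * interQt D S θ1 θ2 x y -
    max (θ2 * S y - interQt D S θ1 θ2 x y) 0 * y

/-!
At the targeting profile both dealers trade the same quantity `T`, so each payoff is
`(y - x) T / 2`. A deviation on which the deviating dealer's own quantity is not the binding one
keeps `Q = T` and only narrows the spread. A deviation on which it binds gives the payoff
`θ₁ (y - x) D x / 2`, resp. `θ₂ (y - x) S y / 2`, a concave function of the deviation with peak
`m_A y`, resp. `s_A x`; so the profile is a best response once `σ₁ θ₁ ≤ m_A (σ₂ θ₂)` and
`s_A (σ₁ θ₁) ≤ σ₂ θ₂`. These follow from the minimal-type condition: `σ₁` is antitone and `σ₂`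
monotone in the type, and `m_A`, `s_A` are monotone because the objectives have increasing
differences and unique maximisers.
-/

section MaximumPrinciple

variable {𝕜 β : Type*} [Field 𝕜] [LinearOrder 𝕜] [IsStrictOrderedRing 𝕜]
  [AddCommGroup β] [LinearOrder β] [IsOrderedAddMonoid β] [Module 𝕜 β]
  [IsStrictOrderedModule 𝕜 β] {s : Set 𝕜} {f : 𝕜 → β} {m x z : 𝕜}

theorem ConcaveOn.le_of_isMaxOn_of_le_of_le (hf : ConcaveOn 𝕜 s f) (hm : m ∈ s)
    (hmax : IsMaxOn f s m) (hx : x ∈ s) (hxz : x ≤ z) (hzm : z ≤ m) : f x ≤ f z :=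
  (le_min le_rfl (hmax hx)).trans (hf.min_le_of_mem_Icc hx hm ⟨hxz, hzm⟩)

theorem ConcaveOn.le_of_isMaxOn_of_ge_of_ge (hf : ConcaveOn 𝕜 s f) (hm : m ∈ s)
    (hmax : IsMaxOn f s m) (hx : x ∈ s) (hmz : m ≤ z) (hzx : z ≤ x) : f x ≤ f z :=
  (le_min (hmax hx) le_rfl).trans (hf.min_le_of_mem_Icc hm hx ⟨hmz, hzx⟩)

end MaximumPrinciple

theorem concaveOn_affine_mul {h : ℝ → ℝ} {U : Set ℝ} (hU : IsOpen U) (hh : ContDiffOn ℝ 2 h U)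
    {a b : ℝ} (hab : Icc a b ⊆ U) (c ε : ℝ)
    (hneg : ∀ r ∈ Ioo a b, 2 * ε * deriv h r + (c + ε * r) * deriv (deriv h) r ≤ 0) :
    ConcaveOn ℝ (Icc a b) fun r => (c + ε * r) * h r := by
  have hh' : ContDiffOn ℝ 1 (deriv h) U := hh.deriv_of_isOpen hU (by norm_num)
  have hderiv : ∀ r ∈ Ioo a b,
      HasDerivAt h (deriv h r) r ∧ HasDerivAt (deriv h) (deriv (deriv h) r) r := by
    intro r hr
    have hrU : U ∈ nhds r := hU.mem_nhds (hab (Ioo_subset_Icc_self hr))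
    exact ⟨((hh.differentiableOn (by norm_num)).differentiableAt hrU).hasDerivAt,
      ((hh'.differentiableOn (by norm_num)).differentiableAt hrU).hasDerivAt⟩
  have haffine (r : ℝ) : HasDerivAt (fun x => c + ε * x) ε r := by
    simpa using ((hasDerivAt_id r).const_mul ε).const_add c
  refine concaveOn_of_hasDerivWithinAt2_nonpos (f' := fun r => ε * h r + (c + ε * r) * deriv h r)
    (f'' := fun r => 2 * ε * deriv h r + (c + ε * r) * deriv (deriv h) r)
    (convex_Icc a b) ((continuousOn_const.add (continuousOn_const.mul continuousOn_id)).mul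
      (hh.continuousOn.mono hab)) ?_ ?_ ?_ <;> rw [interior_Icc]
  · exact fun r hr => ((haffine r).mul (hderiv r hr).1).hasDerivWithinAt
  · intro r hr
    have h2 := ((hderiv r hr).1.const_mul ε).add ((haffine r).mul (hderiv r hr).2)
    exact (h2.congr_deriv (by ring)).hasDerivWithinAt
  · exact hneg

theorem concaveOn_sub_mul {D : ℝ → ℝ} {U s : Set ℝ} (hU : IsOpen U) (hD : ContDiffOn ℝ 2 D U)
    (hsU : s ⊆ U) (hD' : ∀ r ∈ s, 0 ≤ deriv D r) (hD'' : ∀ r ∈ s, deriv (deriv D) r ≤ 0)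
    {a b : ℝ} (hab : Icc a b ⊆ s) : ConcaveOn ℝ (Icc a b) fun r => (b - r) * D r := by
  refine (concaveOn_affine_mul hU hD (hab.trans hsU) b (-1) fun r hr => ?_).congr fun r _ => by ring
  have hr' := hab (Ioo_subset_Icc_self hr)
  nlinarith [hD' r hr', hD'' r hr', hr.2]

theorem concaveOn_mul_sub {S : ℝ → ℝ} {U s : Set ℝ} (hU : IsOpen U) (hS : ContDiffOn ℝ 2 S U)
    (hsU : s ⊆ U) (hS' : ∀ r ∈ s, deriv S r ≤ 0) (hS'' : ∀ r ∈ s, deriv (deriv S) r ≤ 0)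
    {a b : ℝ} (hab : Icc a b ⊆ s) : ConcaveOn ℝ (Icc a b) fun r => (r - a) * S r := by
  refine (concaveOn_affine_mul hU hS (hab.trans hsU) (-a) 1 fun r hr => ?_).congr fun r _ => by ring
  have hr' := hab (Ioo_subset_Icc_self hr)
  nlinarith [hS' r hr', hS'' r hr', hr.1]

section ComparativeStatics

variable {α β : Type*} [LinearOrder α] [AddCommGroup β] [PartialOrder β] [IsOrderedAddMonoid β]

theorem le_of_isMaxOn_Icc_of_monotoneOn_sub {F G : α → β} {l u l' u' a b : α}
    (hl : l ≤ l') (hu : u ≤ u') (hGF : MonotoneOn (fun r => G r - F r) (Icc l' u))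
    (ha : a ∈ Icc l u) (hFa : IsMaxOn F (Icc l u) a) (hb : b ∈ Icc l' u')
    (hGb : IsMaxOn G (Icc l' u') b)
    (huniq : ∀ c ∈ Icc l' u', IsMaxOn G (Icc l' u') c → c = b) : a ≤ b := by
  by_contra! hba
  have hGba : G b ≤ G a :=
    calc G b = (G b - F b) + F b := (sub_add_cancel _ _).symm
      _ ≤ (G a - F a) + F a := add_le_add
          (hGF ⟨hb.1, hba.le.trans ha.2⟩ ⟨hb.1.trans hba.le, ha.2⟩ hba.le)
          (hFa ⟨hl.trans hb.1, hba.le.trans ha.2⟩)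
      _ = G a := sub_add_cancel _ _
  exact hba.ne' (huniq a ⟨hb.1.trans hba.le, ha.2.trans hu⟩ fun r hr => (hGb hr).trans hGba)

end ComparativeStatics

theorem monotoneOn_of_isMaxOn_sub_mul {D mA : ℝ → ℝ} {rb : ℝ} (hD : MonotoneOn D (Icc 0 rb))
    (hmA : ∀ y ∈ Ioc (0:ℝ) rb, mA y ∈ Icc (0:ℝ) y ∧
      IsMaxOn (fun r => (y - r) * D r) (Icc 0 y) (mA y) ∧
      ∀ m ∈ Icc (0:ℝ) y, IsMaxOn (fun r => (y - r) * D r) (Icc 0 y) m → m = mA y) :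
    MonotoneOn mA (Ioc 0 rb) := by
  intro y hy y' hy' hyy'
  obtain ⟨hm, hmax, -⟩ := hmA y hy
  obtain ⟨hm', hmax', huniq'⟩ := hmA y' hy'
  refine le_of_isMaxOn_Icc_of_monotoneOn_sub le_rfl hyy' ?_ hm hmax hm' hmax' huniq'
  intro r hr r' hr' hrr'
  have := mul_le_mul_of_nonneg_left
    (hD ⟨hr.1, hr.2.trans hy.2⟩ ⟨hr'.1, hr'.2.trans hy.2⟩ hrr') (sub_nonneg.2 hyy')
  linarith

theorem monotoneOn_of_isMaxOn_mul_sub {S sA : ℝ → ℝ} {rb : ℝ} (hS : AntitoneOn S (Icc 0 rb))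
    (hsA : ∀ x ∈ Ico (0:ℝ) rb, sA x ∈ Icc x rb ∧
      IsMaxOn (fun r => (r - x) * S r) (Icc x rb) (sA x) ∧
      ∀ m ∈ Icc x rb, IsMaxOn (fun r => (r - x) * S r) (Icc x rb) m → m = sA x) :
    MonotoneOn sA (Ico 0 rb) := by
  intro x hx x' hx' hxx'
  obtain ⟨hs, hmax, -⟩ := hsA x hx
  obtain ⟨hs', hmax', huniq'⟩ := hsA x' hx'
  refine le_of_isMaxOn_Icc_of_monotoneOn_sub hxx' le_rfl ?_ hs hmax hs' hmax' huniq'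
  intro r hr r' hr' hrr'
  have := mul_le_mul_of_nonpos_left
    (hS ⟨hx'.1.trans hr.1, hr.2⟩ ⟨hx'.1.trans hr'.1, hr'.2⟩ hrr') (sub_nonpos.2 hxx')
  linarith

theorem StrictMonoOn.antitoneOn_of_mul_eq {D σ : ℝ → ℝ} {s I : Set ℝ} {T : ℝ}
    (hD : StrictMonoOn D s) (hI : ∀ θ ∈ I, 0 < θ) (hT : 0 ≤ T) (hσs : MapsTo σ I s)
    (hσT : ∀ θ ∈ I, θ * D (σ θ) = T) : AntitoneOn σ I := by
  intro θ hθ θ' hθ' hθθ'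
  by_contra! hlt
  have hD' : 0 ≤ D (σ θ') := (mul_nonneg_iff_of_pos_left (hI θ' hθ')).1 (hσT θ' hθ' ▸ hT)
  have h1 := mul_lt_mul_of_pos_left (hD (hσs hθ) (hσs hθ') hlt) (hI θ hθ)
  have h2 := mul_le_mul_of_nonneg_right hθθ' hD'
  linarith [hσT θ hθ, hσT θ' hθ']

theorem StrictAntiOn.monotoneOn_of_mul_eq {S σ : ℝ → ℝ} {s I : Set ℝ} {T : ℝ}
    (hS : StrictAntiOn S s) (hI : ∀ θ ∈ I, 0 < θ) (hT : 0 ≤ T) (hσs : MapsTo σ I s)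
    (hσT : ∀ θ ∈ I, θ * S (σ θ) = T) : MonotoneOn σ I := by
  intro θ hθ θ' hθ' hθθ'
  by_contra! hlt
  have hS' : 0 ≤ S (σ θ') := (mul_nonneg_iff_of_pos_left (hI θ' hθ')).1 (hσT θ' hθ' ▸ hT)
  have h1 := mul_lt_mul_of_pos_left (hS (hσs hθ') (hσs hθ) hlt) (hI θ hθ)
  have h2 := mul_le_mul_of_nonneg_right hθθ' hS'
  linarith [hσT θ hθ, hσT θ' hθ']

section Payoffs

variable {D S : ℝ → ℝ} {θ1 θ2 x y : ℝ}

theorem piMMt_eq_of_le (hxy : x ≤ y) (hQ : θ1 * D x ≤ θ2 * S y) :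
    piMMt D S θ1 θ2 x y = 1 / 2 * (y - x) * (θ1 * D x) := by
  simp only [piMMt, interQt, min_eq_left hQ, max_eq_left (sub_nonneg.2 hxy), sub_self, max_self,
    zero_mul, sub_zero]

theorem piMMt_le_of_ge (hxy : x ≤ y) (hx : 0 ≤ x) (hQ : θ2 * S y ≤ θ1 * D x) :
    piMMt D S θ1 θ2 x y ≤ 1 / 2 * (y - x) * (θ2 * S y) := by
  simp only [piMMt, interQt, min_eq_right hQ, max_eq_left (sub_nonneg.2 hxy)]
  linarith [mul_nonneg (le_max_right (θ1 * D x - θ2 * S y) 0) hx]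

theorem piRMt_eq_of_ge (hxy : x ≤ y) (hQ : θ2 * S y ≤ θ1 * D x) :
    piRMt D S θ1 θ2 x y = 1 / 2 * (y - x) * (θ2 * S y) := by
  simp only [piRMt, interQt, min_eq_right hQ, max_eq_left (sub_nonneg.2 hxy), sub_self, max_self,
    zero_mul, sub_zero]

theorem piRMt_le_of_le (hxy : x ≤ y) (hy : 0 ≤ y) (hQ : θ1 * D x ≤ θ2 * S y) :
    piRMt D S θ1 θ2 x y ≤ 1 / 2 * (y - x) * (θ1 * D x) := by
  simp only [piRMt, interQt, min_eq_left hQ, max_eq_left (sub_nonneg.2 hxy)]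
  linarith [mul_nonneg (le_max_right (θ2 * S y - θ1 * D x) 0) hy]

theorem isMaxOn_piMMt {x₀ m : ℝ} (hθ1 : 0 ≤ θ1) (hD : MonotoneOn D (Icc 0 y))
    (hconc : ConcaveOn ℝ (Icc 0 y) fun r => (y - r) * D r) (hm : m ∈ Icc 0 y)
    (hmax : IsMaxOn (fun r => (y - r) * D r) (Icc 0 y) m) (hx₀ : x₀ ∈ Icc 0 m)
    (hT : θ1 * D x₀ = θ2 * S y) (hT0 : 0 ≤ θ2 * S y) :
    IsMaxOn (fun x => piMMt D S θ1 θ2 x y) (Icc 0 y) x₀ := by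
  refine isMaxOn_iff.2 fun x hx => ?_
  have hx₀y : x₀ ∈ Icc 0 y := ⟨hx₀.1, hx₀.2.trans hm.2⟩
  rw [piMMt_eq_of_le hx₀y.2 hT.le]
  rcases le_or_gt x x₀ with hxx₀ | hx₀x
  · have hDx : θ1 * D x ≤ θ1 * D x₀ := mul_le_mul_of_nonneg_left (hD hx hx₀y hxx₀) hθ1
    rw [piMMt_eq_of_le hx.2 (hDx.trans hT.le)]
    have := mul_le_mul_of_nonneg_left
      (hconc.le_of_isMaxOn_of_le_of_le hm hmax hx hxx₀ hx₀.2) hθ1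
    linarith
  · calc piMMt D S θ1 θ2 x y ≤ 1 / 2 * (y - x) * (θ2 * S y) :=
          piMMt_le_of_ge hx.2 hx.1
            (hT.ge.trans (mul_le_mul_of_nonneg_left (hD hx₀y hx hx₀x.le) hθ1))
      _ ≤ 1 / 2 * (y - x₀) * (θ1 * D x₀) := by rw [hT]; nlinarith

theorem isMaxOn_piRMt {y₀ m b : ℝ} (hθ2 : 0 ≤ θ2) (hx : 0 ≤ x) (hS : AntitoneOn S (Icc x b))
    (hconc : ConcaveOn ℝ (Icc x b) fun r => (r - x) * S r) (hm : m ∈ Icc x b)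
    (hmax : IsMaxOn (fun r => (r - x) * S r) (Icc x b) m) (hy₀ : y₀ ∈ Icc m b)
    (hT : θ2 * S y₀ = θ1 * D x) (hT0 : 0 ≤ θ1 * D x) :
    IsMaxOn (fun y => piRMt D S θ1 θ2 x y) (Icc x b) y₀ := by
  refine isMaxOn_iff.2 fun y hy => ?_
  have hy₀x : y₀ ∈ Icc x b := ⟨hm.1.trans hy₀.1, hy₀.2⟩
  rw [piRMt_eq_of_ge hy₀x.1 hT.le]
  rcases le_or_gt y₀ y with hy₀y | hyy₀
  · have hSy : θ2 * S y ≤ θ2 * S y₀ := mul_le_mul_of_nonneg_left (hS hy₀x hy hy₀y) hθ2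
    rw [piRMt_eq_of_ge hy.1 (hSy.trans hT.le)]
    have := mul_le_mul_of_nonneg_left
      (hconc.le_of_isMaxOn_of_ge_of_ge hm hmax hy hy₀.1 hy₀y) hθ2
    linarith
  · calc piRMt D S θ1 θ2 x y ≤ 1 / 2 * (y - x) * (θ1 * D x) :=
          piRMt_le_of_le hy.1 (hx.trans hy.1)
            (hT.ge.trans (mul_le_mul_of_nonneg_left (hS hy hy₀x hyy₀.le) hθ2))
      _ ≤ 1 / 2 * (y₀ - x) * (θ2 * S y₀) := by rw [hT]; nlinarith

end Payoffs

theorem asymmetric_equilibrium_existence_general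
    (rhat rb : ℝ) (D S mA sA : ℝ → ℝ)
    (hrhat : 0 < rhat) (hrb : rhat < rb)
    (hDm : StrictMonoOn D (Icc 0 rb))
    (hSa : StrictAntiOn S (Icc 0 rb))
    (U : Set ℝ) (hUo : IsOpen U) (hU : Icc (0:ℝ) rb ⊆ U)
    (hD2 : ContDiffOn ℝ 2 D U) (hS2 : ContDiffOn ℝ 2 S U)
    (hD' : ∀ x ∈ Icc (0:ℝ) rb, 0 < deriv D x)
    (hD'' : ∀ x ∈ Icc (0:ℝ) rb, deriv (deriv D) x < 0)
    (hS' : ∀ x ∈ Icc (0:ℝ) rb, deriv S x < 0)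
    (hS'' : ∀ x ∈ Icc (0:ℝ) rb, deriv (deriv S) x < 0)
    (θl1 θu1 θl2 θu2 : ℝ)
    (hθ1 : 0 < θl1) (hθ1' : θl1 ≤ θu1) (hθ2 : 0 < θl2) (hθ2' : θl2 ≤ θu2)
    (T : ℝ) (hT0 : 0 < T)
    (σ1 σ2 : ℝ → ℝ)
    (hσ1 : ∀ θ1 ∈ Icc θl1 θu1, σ1 θ1 ∈ Icc (0:ℝ) rhat ∧ θ1 * D (σ1 θ1) = T)
    (hσ2 : ∀ θ2 ∈ Icc θl2 θu2, σ2 θ2 ∈ Icc rhat rb ∧ θ2 * S (σ2 θ2) = T)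
    (hmA : ∀ y ∈ Ioc (0:ℝ) rb, mA y ∈ Icc (0:ℝ) y ∧
      (∀ r ∈ Icc (0:ℝ) y, (y - r) * D r ≤ (y - mA y) * D (mA y)) ∧
      (∀ m ∈ Icc (0:ℝ) y,
        (∀ r ∈ Icc (0:ℝ) y, (y - r) * D r ≤ (y - m) * D m) → m = mA y))
    (hsA : ∀ x ∈ Ico (0:ℝ) rb, sA x ∈ Icc x rb ∧
      (∀ r ∈ Icc x rb, (r - x) * S r ≤ (sA x - x) * S (sA x)) ∧
      (∀ m ∈ Icc x rb,
        (∀ r ∈ Icc x rb, (r - x) * S r ≤ (m - x) * S m) → m = sA x))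
    (hmin1 : σ1 θl1 ≤ mA (σ2 θl2))
    (hmin2 : sA (σ1 θl1) ≤ σ2 θl2) :
    ∀ θ1 ∈ Icc θl1 θu1, ∀ θ2 ∈ Icc θl2 θu2,
      (∀ x ∈ Icc (0:ℝ) (σ2 θ2),
        piMMt D S θ1 θ2 x (σ2 θ2) ≤ piMMt D S θ1 θ2 (σ1 θ1) (σ2 θ2)) ∧
      (∀ y ∈ Icc (σ1 θ1) rb,
        piRMt D S θ1 θ2 (σ1 θ1) y ≤ piRMt D S θ1 θ2 (σ1 θ1) (σ2 θ2)) := by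
  intro θ1 hθ1m θ2 hθ2m
  have hθl1 : θl1 ∈ Icc θl1 θu1 := ⟨le_rfl, hθ1'⟩
  have hθl2 : θl2 ∈ Icc θl2 θu2 := ⟨le_rfl, hθ2'⟩
  have hx (θ) (hθ : θ ∈ Icc θl1 θu1) : σ1 θ ∈ Ico 0 rb :=
    ⟨(hσ1 θ hθ).1.1, (hσ1 θ hθ).1.2.trans_lt hrb⟩
  have hy (θ) (hθ : θ ∈ Icc θl2 θu2) : σ2 θ ∈ Ioc 0 rb :=
    ⟨hrhat.trans_le (hσ2 θ hθ).1.1, (hσ2 θ hθ).1.2⟩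
  have hσ1_anti : AntitoneOn σ1 (Icc θl1 θu1) :=
    hDm.antitoneOn_of_mul_eq (fun θ hθ => hθ1.trans_le hθ.1) hT0.le
      (fun θ hθ => Ico_subset_Icc_self (hx θ hθ)) fun θ hθ => (hσ1 θ hθ).2
  have hσ2_mono : MonotoneOn σ2 (Icc θl2 θu2) :=
    hSa.monotoneOn_of_mul_eq (fun θ hθ => hθ2.trans_le hθ.1) hT0.le
      (fun θ hθ => Ioc_subset_Icc_self (hy θ hθ)) fun θ hθ => (hσ2 θ hθ).2
  have hx_le_mA : σ1 θ1 ≤ mA (σ2 θ2) :=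
    calc σ1 θ1 ≤ σ1 θl1 := hσ1_anti hθl1 hθ1m hθ1m.1
      _ ≤ mA (σ2 θl2) := hmin1
      _ ≤ mA (σ2 θ2) := monotoneOn_of_isMaxOn_sub_mul hDm.monotoneOn hmA (hy θl2 hθl2)
          (hy θ2 hθ2m) (hσ2_mono hθl2 hθ2m hθ2m.1)
  have hsA_le_y : sA (σ1 θ1) ≤ σ2 θ2 :=
    calc sA (σ1 θ1) ≤ sA (σ1 θl1) := monotoneOn_of_isMaxOn_mul_sub hSa.antitoneOn hsA
          (hx θ1 hθ1m) (hx θl1 hθl1) (hσ1_anti hθl1 hθ1m hθ1m.1)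
      _ ≤ σ2 θl2 := hmin2
      _ ≤ σ2 θ2 := hσ2_mono hθl2 hθ2m hθ2m.1
  obtain ⟨hmA_mem, hmA_max, -⟩ := hmA _ (hy θ2 hθ2m)
  obtain ⟨hsA_mem, hsA_max, -⟩ := hsA _ (hx θ1 hθ1m)
  have hsub_y : Icc 0 (σ2 θ2) ⊆ Icc 0 rb := Icc_subset_Icc_right (hy θ2 hθ2m).2
  have hsub_x : Icc (σ1 θ1) rb ⊆ Icc 0 rb := Icc_subset_Icc_left (hx θ1 hθ1m).1
  have hT : θ1 * D (σ1 θ1) = θ2 * S (σ2 θ2) := (hσ1 θ1 hθ1m).2.trans (hσ2 θ2 hθ2m).2.symm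
  exact ⟨isMaxOn_piMMt (hθ1.trans_le hθ1m.1).le (hDm.monotoneOn.mono hsub_y)
      (concaveOn_sub_mul hUo hD2 hU (fun r hr => (hD' r hr).le) (fun r hr => (hD'' r hr).le)
        hsub_y) hmA_mem hmA_max ⟨(hx θ1 hθ1m).1, hx_le_mA⟩ hT ((hσ2 θ2 hθ2m).2 ▸ hT0.le),
    isMaxOn_piRMt (hθ2.trans_le hθ2m.1).le (hx θ1 hθ1m).1 (hSa.antitoneOn.mono hsub_x)
      (concaveOn_mul_sub hUo hS2 hU (fun r hr => (hS' r hr).le) (fun r hr => (hS'' r hr).le)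
        hsub_x) hsA_mem hsA_max ⟨hsA_le_y, (hy θ2 hθ2m).2⟩ hT.symm ((hσ1 θ1 hθ1m).2 ▸ hT0.le)⟩

/-- Existence of asymmetric-information equilibrium strategies: under the
minimal-type constrained-equilibrium condition, the `T`-targeting strategy
profile is an ex-post equilibrium. -/
theorem asymmetric_equilibrium_existence
    (rhat rb Tmax : ℝ) (D S mA sA : ℝ → ℝ)
    (hrhat : 0 < rhat) (hrb : rhat < rb) (hTmax : 0 < Tmax)
    (hDc : ContinuousOn D (Icc 0 rb)) (hDm : StrictMonoOn D (Icc 0 rb))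
    (hD0 : D 0 = 0) (hDr : D rhat = Tmax)
    (hSc : ContinuousOn S (Icc 0 rb)) (hSa : StrictAntiOn S (Icc 0 rb))
    (hSb : S rb = 0) (hSr : S rhat = Tmax)
    (U : Set ℝ) (hUo : IsOpen U) (hU : Icc (0:ℝ) rb ⊆ U)
    (hD2 : ContDiffOn ℝ 2 D U) (hS2 : ContDiffOn ℝ 2 S U)
    (hD' : ∀ x ∈ Icc (0:ℝ) rb, 0 < deriv D x)
    (hD'' : ∀ x ∈ Icc (0:ℝ) rb, deriv (deriv D) x < 0)
    (hS' : ∀ x ∈ Icc (0:ℝ) rb, deriv S x < 0)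
    (hS'' : ∀ x ∈ Icc (0:ℝ) rb, deriv (deriv S) x < 0)
    (θl1 θu1 θl2 θu2 : ℝ)
    (hθ1 : 0 < θl1) (hθ1' : θl1 ≤ θu1) (hθ2 : 0 < θl2) (hθ2' : θl2 ≤ θu2)
    (T : ℝ) (hT0 : 0 < T) (hTle : T ≤ min (θl1 * Tmax) (θl2 * Tmax))
    (σ1 σ2 : ℝ → ℝ)
    (hσ1 : ∀ θ1 ∈ Icc θl1 θu1, σ1 θ1 ∈ Icc (0:ℝ) rhat ∧ θ1 * D (σ1 θ1) = T)
    (hσ2 : ∀ θ2 ∈ Icc θl2 θu2, σ2 θ2 ∈ Icc rhat rb ∧ θ2 * S (σ2 θ2) = T)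
    (hmA : ∀ y ∈ Ioc (0:ℝ) rb, mA y ∈ Icc (0:ℝ) y ∧
      (∀ r ∈ Icc (0:ℝ) y, (y - r) * D r ≤ (y - mA y) * D (mA y)) ∧
      (∀ m ∈ Icc (0:ℝ) y,
        (∀ r ∈ Icc (0:ℝ) y, (y - r) * D r ≤ (y - m) * D m) → m = mA y))
    (hsA : ∀ x ∈ Ico (0:ℝ) rb, sA x ∈ Icc x rb ∧
      (∀ r ∈ Icc x rb, (r - x) * S r ≤ (sA x - x) * S (sA x)) ∧
      (∀ m ∈ Icc x rb,
        (∀ r ∈ Icc x rb, (r - x) * S r ≤ (m - x) * S m) → m = sA x))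
    (hmin1 : σ1 θl1 ≤ mA (σ2 θl2))
    (hmin2 : sA (σ1 θl1) ≤ σ2 θl2) :
    ∀ θ1 ∈ Icc θl1 θu1, ∀ θ2 ∈ Icc θl2 θu2,
      (∀ x ∈ Icc (0:ℝ) (σ2 θ2),
        piMMt D S θ1 θ2 x (σ2 θ2) ≤ piMMt D S θ1 θ2 (σ1 θ1) (σ2 θ2)) ∧
      (∀ y ∈ Icc (σ1 θ1) rb,
        piRMt D S θ1 θ2 (σ1 θ1) y ≤ piRMt D S θ1 θ2 (σ1 θ1) (σ2 θ2)) :=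
  asymmetric_equilibrium_existence_general rhat rb D S mA sA hrhat hrb hDm hSa U hUo hU hD2 hS2 hD'
    hD'' hS' hS'' θl1 θu1 θl2 θu2 hθ1 hθ1' hθ2 hθ2' T hT0 σ1 σ2 hσ1 hσ2 hmA hsA hmin1 hmin2
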